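/- arXiv:2405.09887 — 2 statements merged into one kernel-verified Lean document; each statement's English description precedes it below -/
import Mathlib

section
/- The quantization-based LHS estimator μ_QLHS = Σ_{i=1}^N p_i f(U_i, V_{π(i)}), where π is a uniformly random permutation of {1,...,N} independent of the U_i and V_j, is unbiased: E[μ_QLHS] = E[f(X,Y)]. -/
/-!
Since `π` is uniform and independent of `(U, V)`, `V (π i)` is a uniformly chosen member of the
sample, so by linearity `E[μ_QLHS] = ∑ i, p i * N⁻¹ * ∑ j, E f(U i, V j)`. Independence of `U i`
and `V j` turns `E f(U i, V j)` into `E g i (V j)` with `g i v = E f(U i, v)`, and the LHS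
property averages these to `E g i (Y)`. Since the conditional laws of `X` on the cells recombine
to the law of `X`, `∑ i, p i * g i v = E f(X, v)`, and independence of `X` and `Y` gives
`E f(X, Y)`.
-/

open MeasureTheory ProbabilityTheory

namespace Equiv.Perm

variable {α M : Type*} [Fintype α] [DecidableEq α]

theorem sum_apply_eq_sum_apply [AddCommMonoid M] (F : α → M) (a b : α) :
    ∑ σ : Perm α, F (σ a) = ∑ σ : Perm α, F (σ b) :=
  Fintype.sum_equiv (Equiv.mulRight (swap b a)) _ _ fun σ => by simp [Perm.mul_apply]

theorem card_smul_sum_apply [AddCommMonoid M] (F : α → M) (a : α) :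
    Fintype.card α • ∑ σ : Perm α, F (σ a) = (Fintype.card α).factorial • ∑ b, F b :=
  calc Fintype.card α • ∑ σ : Perm α, F (σ a)
      = ∑ b : α, ∑ σ : Perm α, F (σ b) := by
        rw [← Finset.card_univ, ← Finset.sum_const]
        exact Finset.sum_congr rfl fun b _ => sum_apply_eq_sum_apply F a b
    _ = ∑ σ : Perm α, ∑ b, F b := by
        rw [Finset.sum_comm]
        exact Finset.sum_congr rfl fun σ _ => Equiv.sum_comp σ F
    _ = (Fintype.card α).factorial • ∑ b, F b := by
        rw [Finset.sum_const, Finset.card_univ, Fintype.card_perm]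

theorem inv_factorial_mul_sum_apply (F : α → ℝ) (a : α) :
    ((Fintype.card α).factorial : ℝ)⁻¹ * ∑ σ : Perm α, F (σ a)
      = (Fintype.card α : ℝ)⁻¹ * ∑ b, F b := by
  have : Nonempty α := ⟨a⟩
  have hcard : (Fintype.card α : ℝ) ≠ 0 := Nat.cast_ne_zero.2 Fintype.card_ne_zero
  have h := card_smul_sum_apply F a
  rw [nsmul_eq_mul, nsmul_eq_mul] at h
  field_simp
  linarith

end Equiv.Perm

theorem apply_eq_sum_indicator_preimage {Ω ι M : Type*} [Fintype ι] [AddCommMonoid M]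
    (π : Ω → ι) (H : ι → Ω → M) (ω : Ω) :
    H (π ω) ω = ∑ i, (π ⁻¹' {i}).indicator (H i) ω := by
  classical
  simp [Set.indicator_apply]

namespace MeasureTheory

theorem Integrable.cond_prod {α β E : Type*} [MeasurableSpace α] [MeasurableSpace β]
    [NormedAddCommGroup E] {μ : Measure α} [SFinite μ] {ν : Measure β} [SFinite ν]
    {F : α × β → E} (hF : Integrable F (μ.prod ν)) (s : Set α) : Integrable F (μ[|s].prod ν) := by
  rcases eq_or_ne (μ s) 0 with hs | hs
  · simp [cond_eq_zero_of_meas_eq_zero hs]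
  refine hF.of_measure_le_smul (ENNReal.inv_ne_top.2 hs) ?_
  rw [ProbabilityTheory.cond, Measure.prod_smul_left]
  gcongr
  exact Measure.restrict_le_self

theorem integrable_apply_of_fintype {Ω ι E : Type*} [MeasurableSpace Ω] [MeasurableSpace ι]
    [MeasurableSingletonClass ι] [Fintype ι] [NormedAddCommGroup E] {P : Measure Ω} {π : Ω → ι}
    (hπ : Measurable π) {H : ι → Ω → E} (hH : ∀ i, Integrable (H i) P) :
    Integrable (fun ω => H (π ω) ω) P := by
  simp_rw [apply_eq_sum_indicator_preimage π H]
  exact integrable_finsetSum _ fun i _ => (hH i).indicator (hπ (measurableSet_singleton i))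

end MeasureTheory

namespace ProbabilityTheory

theorem IndepFun.integral_apply_eq_sum {Ω ι β : Type*} [MeasurableSpace Ω] [MeasurableSpace ι]
    [MeasurableSingletonClass ι] [Fintype ι] [MeasurableSpace β] {P : Measure Ω}
    [IsFiniteMeasure P] {π : Ω → ι} {W : Ω → β} {G : ι → β → ℝ} (hπ : Measurable π)
    (hW : Measurable W) (hind : IndepFun π W P)
    (hG : ∀ i, Measurable (G i)) (hint : ∀ i, Integrable (fun ω => G i (W ω)) P) :
    ∫ ω, G (π ω) (W ω) ∂P = ∑ i, P.real (π ⁻¹' {i}) * ∫ ω, G i (W ω) ∂P := by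
  simp_rw [apply_eq_sum_indicator_preimage π (fun i ω => G i (W ω))]
  rw [integral_finsetSum _ fun i _ => (hint i).indicator (hπ (measurableSet_singleton i))]
  refine Finset.sum_congr rfl fun i _ => ?_
  have hprod := hind.integral_fun_comp_mul_comp hπ.aemeasurable hW.aemeasurable
    (f := ({i} : Set ι).indicator 1) (g := G i)
    (measurable_one.indicator (measurableSet_singleton i)).aestronglyMeasurable
    (hG i).aestronglyMeasurable
  have hmul : ∀ g : Ω → ℝ,
      (fun ω => ({i} : Set ι).indicator (1 : ι → ℝ) (π ω) * g ω) = (π ⁻¹' {i}).indicator g := by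
    intro g; ext ω
    by_cases h : π ω = i <;> simp [h]
  have hone := hmul 1
  simp only [Pi.one_apply, mul_one] at hone
  rwa [hone, hmul, integral_indicator_one (hπ (measurableSet_singleton i))] at hprod

theorem IndepFun.integral_apply_perm_apply_of_uniform {Ω α γ δ : Type*} [MeasurableSpace Ω]
    [Fintype α] [DecidableEq α] [MeasurableSpace (Equiv.Perm α)]
    [MeasurableSingletonClass (Equiv.Perm α)] [MeasurableSpace γ] [MeasurableSpace δ]
    {P : Measure Ω} [IsFiniteMeasure P] {π : Ω → Equiv.Perm α} {U : α → Ω → γ} {V : α → Ω → δ}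
    (hπ : Measurable π) (hU : ∀ a, Measurable (U a)) (hV : ∀ b, Measurable (V b))
    (hind : IndepFun π (fun ω => (fun a => U a ω, fun b => V b ω)) P)
    (hunif : ∀ σ, P (π ⁻¹' {σ}) = ((Fintype.card α).factorial : ENNReal)⁻¹)
    {f : γ → δ → ℝ} (hf : Measurable (Function.uncurry f))
    (hint : ∀ a b, Integrable (fun ω => f (U a ω) (V b ω)) P) (a : α) :
    ∫ ω, f (U a ω) (V (π ω a) ω) ∂P
      = (Fintype.card α : ℝ)⁻¹ * ∑ b, ∫ ω, f (U a ω) (V b ω) ∂P := by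
  rw [hind.integral_apply_eq_sum hπ
    ((measurable_pi_lambda _ hU).prodMk (measurable_pi_lambda _ hV))
    (G := fun σ q => f (q.1 a) (q.2 (σ a)))
    (fun σ => hf.comp (f := fun q : (α → γ) × (α → δ) => (q.1 a, q.2 (σ a))) (by fun_prop))
    fun σ => hint a (σ a)]
  simp_rw [measureReal_def, hunif, ENNReal.toReal_inv, ENNReal.toReal_natCast, ← Finset.mul_sum]
  exact Equiv.Perm.inv_factorial_mul_sum_apply (fun b => ∫ ω, f (U a ω) (V b ω) ∂P) a

section Conditioning

variable {α : Type*} [MeasurableSpace α] {μ : Measure α}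

theorem sum_measure_smul_cond_of_partition [IsFiniteMeasure μ] {ι : Type*} [Fintype ι]
    {C : ι → Set α} (hC : ∀ i, MeasurableSet (C i)) (hpart : ∀ x, ∃! i, x ∈ C i) :
    ∑ i, μ (C i) • μ[|C i] = μ := by
  let _ : MeasurableSpace ι := ⊤
  choose idx hidx using hpart
  have hfiber : ∀ i, idx ⁻¹' {i} = C i := fun i => by
    ext x
    exact ⟨fun h => h ▸ (hidx x).1, fun h => ((hidx x).2 i h).symm⟩
  have hmeas : Measurable idx := measurable_to_countable' fun i => hfiber i ▸ hC i
  simpa only [hfiber] using sum_meas_smul_cond_fiber hmeas μ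

theorem integral_eq_sum_measureReal_mul_integral_cond [IsFiniteMeasure μ] {ι : Type*} [Fintype ι]
    {C : ι → Set α} (hC : ∀ i, MeasurableSet (C i)) (hpart : ∀ x, ∃! i, x ∈ C i)
    {h : α → ℝ} (hh : Integrable h μ) :
    ∫ x, h x ∂μ = ∑ i, μ.real (C i) * ∫ x, h x ∂μ[|C i] := by
  rw [← sum_measure_smul_cond_of_partition (μ := μ) hC hpart] at hh
  conv_lhs => rw [← sum_measure_smul_cond_of_partition (μ := μ) hC hpart]
  rw [integral_finsetSum_measure fun i _ => integrable_finsetSum_measure.1 hh i (Finset.mem_univ i)]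
  simp [integral_smul_measure, measureReal_def]

end Conditioning

section IndepFubini

variable {Ω α β : Type*} [MeasurableSpace Ω] [MeasurableSpace α] [MeasurableSpace β]
  {P : Measure Ω} [IsFiniteMeasure P] {U : Ω → α} {V : Ω → β} {f : α → β → ℝ}

theorem IndepFun.integrable_uncurry_map_prod (hUV : IndepFun U V P) (hU : Measurable U)
    (hV : Measurable V) (hf : Measurable (Function.uncurry f))
    (hint : Integrable (fun ω => f (U ω) (V ω)) P) :
    Integrable (Function.uncurry f) ((P.map U).prod (P.map V)) := by
  rw [← hUV.map_prod_eq_prod_map_map hU.aemeasurable hV.aemeasurable]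
  exact (integrable_map_measure hf.aestronglyMeasurable (hU.prodMk hV).aemeasurable).2 hint

theorem IndepFun.integrable_integral_map (hUV : IndepFun U V P) (hU : Measurable U)
    (hV : Measurable V) (hf : Measurable (Function.uncurry f))
    (hint : Integrable (fun ω => f (U ω) (V ω)) P) :
    Integrable (fun ω => ∫ u, f u (V ω) ∂P.map U) P :=
  (hUV.integrable_uncurry_map_prod hU hV hf hint).integral_prod_right.comp_measurable hV

theorem IndepFun.integral_eq_integral_integral_map (hUV : IndepFun U V P) (hU : Measurable U)
    (hV : Measurable V) (hf : Measurable (Function.uncurry f))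
    (hint : Integrable (fun ω => f (U ω) (V ω)) P) :
    ∫ ω, f (U ω) (V ω) ∂P = ∫ ω, ∫ u, f u (V ω) ∂P.map U ∂P := by
  have hprod := hUV.integrable_uncurry_map_prod hU hV hf hint
  calc ∫ ω, f (U ω) (V ω) ∂P
      = ∫ q, Function.uncurry f q ∂P.map (fun ω => (U ω, V ω)) :=
        (integral_map (hU.prodMk hV).aemeasurable hf.aestronglyMeasurable).symm
    _ = ∫ v, ∫ u, f u v ∂P.map U ∂P.map V := by
        rw [hUV.map_prod_eq_prod_map_map hU.aemeasurable hV.aemeasurable,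
          integral_prod_symm _ hprod]
        rfl
    _ = ∫ ω, ∫ u, f u (V ω) ∂P.map U ∂P :=
        integral_map hV.aemeasurable hf.stronglyMeasurable.integral_prod_left'.aestronglyMeasurable

theorem IndepFun.integrable_integral_cond (hUV : IndepFun U V P) (hU : Measurable U)
    (hV : Measurable V) (hf : Measurable (Function.uncurry f))
    (hint : Integrable (fun ω => f (U ω) (V ω)) P) (s : Set α) :
    Integrable (fun ω => ∫ u, f u (V ω) ∂(P.map U)[|s]) P :=
  ((hUV.integrable_uncurry_map_prod hU hV hf hint).cond_prod s).integral_prod_right.comp_measurable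
    hV

theorem IndepFun.sum_measureReal_mul_integral_cond_eq_integral (hUV : IndepFun U V P)
    (hU : Measurable U) (hV : Measurable V) (hf : Measurable (Function.uncurry f))
    (hint : Integrable (fun ω => f (U ω) (V ω)) P) {ι : Type*} [Fintype ι] {C : ι → Set α}
    (hC : ∀ i, MeasurableSet (C i)) (hpart : ∀ x, ∃! i, x ∈ C i) :
    ∑ i, (P.map U).real (C i) * ∫ ω, ∫ u, f u (V ω) ∂(P.map U)[|C i] ∂P
      = ∫ ω, f (U ω) (V ω) ∂P := by
  have hpartition : ∀ᵐ v ∂P.map V,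
      ∑ i, (P.map U).real (C i) * ∫ u, f u v ∂(P.map U)[|C i] = ∫ u, f u v ∂P.map U :=
    (hUV.integrable_uncurry_map_prod hU hV hf hint).prod_left_ae.mono fun v hv =>
      (integral_eq_sum_measureReal_mul_integral_cond hC hpart hv).symm
  calc ∑ i, (P.map U).real (C i) * ∫ ω, ∫ u, f u (V ω) ∂(P.map U)[|C i] ∂P
      = ∫ ω, ∑ i, (P.map U).real (C i) * ∫ u, f u (V ω) ∂(P.map U)[|C i] ∂P := by
        rw [integral_finsetSum _ fun i _ =>
          (hUV.integrable_integral_cond hU hV hf hint (C i)).const_mul _]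
        simp_rw [integral_const_mul]
    _ = ∫ ω, ∫ u, f u (V ω) ∂P.map U ∂P :=
        integral_congr_ae (ae_of_ae_map hV.aemeasurable hpartition)
    _ = ∫ ω, f (U ω) (V ω) ∂P := (hUV.integral_eq_integral_integral_map hU hV hf hint).symm

end IndepFubini

end ProbabilityTheory

theorem stmt_3_general {Ω : Type*} [MeasurableSpace Ω] (P : Measure Ω) [IsProbabilityMeasure P]
    {s m N : ℕ}
    [MeasurableSpace (Equiv.Perm (Fin N))] [MeasurableSingletonClass (Equiv.Perm (Fin N))]
    (X : Ω → (Fin s → ℝ)) (Y : Ω → (Fin m → ℝ)) (hX : Measurable X) (hY : Measurable Y)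
    (hXY : IndepFun X Y P)
    (f : (Fin s → ℝ) → (Fin m → ℝ) → ℝ)
    (hf : Measurable (fun p : (Fin s → ℝ) × (Fin m → ℝ) => f p.1 p.2))
    (hfint : Integrable (fun ω => f (X ω) (Y ω)) P)
    (C : Fin N → Set (Fin s → ℝ)) (hC : ∀ i, MeasurableSet (C i))
    (hpart : ∀ x, ∃! i, x ∈ C i)
    (U : Fin N → Ω → (Fin s → ℝ)) (hUmeas : ∀ i, Measurable (U i))
    (hU : ∀ i, Measure.map (U i) P = (Measure.map X P)[|C i])
    (V : Fin N → Ω → (Fin m → ℝ)) (hVmeas : ∀ j, Measurable (V j))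
    -- LHS property of the sample `V` of `Y` : marginal averages match `Y`
    (hV : ∀ g : (Fin m → ℝ) → ℝ, Integrable (fun ω => g (Y ω)) P →
      (∀ j, Integrable (fun ω => g (V j ω)) P) →
      (1 / N : ℝ) * ∑ j, ∫ ω, g (V j ω) ∂P = ∫ ω, g (Y ω) ∂P)
    (hUV : ∀ i j, IndepFun (U i) (V j) P)
    (hintUV : ∀ i j, Integrable (fun ω => f (U i ω) (V j ω)) P)
    (π : Ω → Equiv.Perm (Fin N)) (hπmeas : Measurable π)
    -- `π` is uniform on the symmetric group
    (hπ : ∀ a : Equiv.Perm (Fin N), P (π ⁻¹' {a}) = ((Nat.factorial N : ENNReal))⁻¹)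
    -- `π` is independent of `(U, V)`
    (hπindep : IndepFun π (fun ω => (fun i => U i ω, fun j => V j ω)) P) :
    ∫ ω, ∑ i, (P (X ⁻¹' (C i))).toReal * f (U i ω) (V (π ω i) ω) ∂P
      = ∫ ω, f (X ω) (Y ω) ∂P := by
  set μ := P.map X
  have hp : ∀ i, (P (X ⁻¹' C i)).toReal = μ.real (C i) := fun i => by
    rw [measureReal_def, Measure.map_apply hX (hC i)]
  have hgY : ∀ i, Integrable (fun ω => ∫ u, f u (Y ω) ∂μ[|C i]) P := fun i =>
    hXY.integrable_integral_cond hX hY hf hfint (C i)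
  have hgV : ∀ i j, Integrable (fun ω => ∫ u, f u (V j ω) ∂μ[|C i]) P := fun i j =>
    hU i ▸ (hUV i j).integrable_integral_map (hUmeas i) (hVmeas j) hf (hintUV i j)
  have hintUπ : ∀ i, Integrable (fun ω => f (U i ω) (V (π ω i) ω)) P := fun i =>
    integrable_apply_of_fintype hπmeas (H := fun σ ω => f (U i ω) (V (σ i) ω))
      fun σ => hintUV i (σ i)
  have hstratum : ∀ i, ∫ ω, f (U i ω) (V (π ω i) ω) ∂P = ∫ ω, ∫ u, f u (Y ω) ∂μ[|C i] ∂P := by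
    intro i
    rw [hπindep.integral_apply_perm_apply_of_uniform hπmeas hUmeas hVmeas (by simpa using hπ) hf
      hintUV i, ← hV (fun v => ∫ u, f u v ∂μ[|C i]) (hgY i) (hgV i)]
    simp [← hU i, (hUV i _).integral_eq_integral_integral_map (hUmeas i) (hVmeas _) hf
      (hintUV i _)]
  calc ∫ ω, ∑ i, (P (X ⁻¹' (C i))).toReal * f (U i ω) (V (π ω i) ω) ∂P
      = ∑ i, μ.real (C i) * ∫ ω, f (U i ω) (V (π ω i) ω) ∂P := by
        rw [integral_finsetSum _ fun i _ => (hintUπ i).const_mul _]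
        simp_rw [integral_const_mul, hp]
    _ = ∑ i, μ.real (C i) * ∫ ω, ∫ u, f u (Y ω) ∂μ[|C i] ∂P := by
        simp_rw [hstratum]
    _ = ∫ ω, f (X ω) (Y ω) ∂P :=
        hXY.sum_measureReal_mul_integral_cond_eq_integral hX hY hf hfint hC hpart

/-- The quantization-based LHS estimator `μ_QLHS = ∑ i p i * f (U i, V (π i))`, where `π`
is a uniformly random permutation independent of the `U i` and `V j`, is unbiased:
`E[μ_QLHS] = E[f(X,Y)]`. -/
theorem stmt_3 {Ω : Type*} [MeasurableSpace Ω] (P : Measure Ω) [IsProbabilityMeasure P]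
    {s m N : ℕ} [NeZero N]
    [MeasurableSpace (Equiv.Perm (Fin N))] [MeasurableSingletonClass (Equiv.Perm (Fin N))]
    (X : Ω → (Fin s → ℝ)) (Y : Ω → (Fin m → ℝ)) (hX : Measurable X) (hY : Measurable Y)
    (hXY : IndepFun X Y P)
    (f : (Fin s → ℝ) → (Fin m → ℝ) → ℝ)
    (hf : Measurable (fun p : (Fin s → ℝ) × (Fin m → ℝ) => f p.1 p.2))
    (hfint : Integrable (fun ω => f (X ω) (Y ω)) P)
    (C : Fin N → Set (Fin s → ℝ)) (hC : ∀ i, MeasurableSet (C i))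
    (hpart : ∀ x, ∃! i, x ∈ C i)
    (hpos : ∀ i, 0 < P (X ⁻¹' (C i)))
    (U : Fin N → Ω → (Fin s → ℝ)) (hUmeas : ∀ i, Measurable (U i))
    (hU : ∀ i, Measure.map (U i) P = (Measure.map X P)[|C i])
    (V : Fin N → Ω → (Fin m → ℝ)) (hVmeas : ∀ j, Measurable (V j))
    -- LHS property of the sample `V` of `Y` : marginal averages match `Y`
    (hV : ∀ g : (Fin m → ℝ) → ℝ, Integrable (fun ω => g (Y ω)) P →
      (∀ j, Integrable (fun ω => g (V j ω)) P) →
      (1 / N : ℝ) * ∑ j, ∫ ω, g (V j ω) ∂P = ∫ ω, g (Y ω) ∂P)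
    (hUV : ∀ i j, IndepFun (U i) (V j) P)
    (hintUV : ∀ i j, Integrable (fun ω => f (U i ω) (V j ω)) P)
    (π : Ω → Equiv.Perm (Fin N)) (hπmeas : Measurable π)
    -- `π` is uniform on the symmetric group
    (hπ : ∀ a : Equiv.Perm (Fin N), P (π ⁻¹' {a}) = ((Nat.factorial N : ENNReal))⁻¹)
    -- `π` is independent of `(U, V)`
    (hπindep : IndepFun π (fun ω => (fun i => U i ω, fun j => V j ω)) P)
    (hest : Integrable (fun ω => ∑ i, (P (X ⁻¹' (C i))).toReal * f (U i ω) (V (π ω i) ω)) P) :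
    ∫ ω, ∑ i, (P (X ⁻¹' (C i))).toReal * f (U i ω) (V (π ω i) ω) ∂P
      = ∫ ω, f (X ω) (Y ω) ∂P :=
  stmt_3_general P X Y hX hY hXY f hf hfint C hC hpart U hUmeas hU V hVmeas hV hUV hintUV π hπmeas
    hπ hπindep
end

section
/- Given i.i.d. copies (X', Y') of (X, Y), the HSIC measure admits the expectation formula HSIC(X,Y) = E[k(X,X')k_Y(Y,Y')] + E[k(X,X')]·E[k_Y(Y,Y')] − 2 E[ E[k(X,X') | X] · E[k_Y(Y,Y') | Y] ], where HSIC(X,Y) is the squared RKHS norm of μ(P_{(X,Y)}) − μ(P_X)⊗μ(P_Y). -/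
open MeasureTheory ProbabilityTheory
open scoped RealInnerProductSpace


lemma aux_int {Ω E : Type*} [MeasurableSpace Ω] [NormedAddCommGroup E]
    {P : Measure Ω} [IsFiniteMeasure P] {f : Ω → E}
    (hf : AEStronglyMeasurable f P) {C : ℝ} (hC : ∀ ω, ‖f ω‖ ≤ C) :
    Integrable f P :=
  ⟨hf, HasFiniteIntegral.of_bounded (C := C) (Filter.Eventually.of_forall hC)⟩

/-- Given an i.i.d. copy `(X', Y')` of `(X, Y)`, the HSIC measure (the squared RKHS norm
of `μ(P_{(X,Y)}) − μ(P_X) ⊗ μ(P_Y)`, with feature maps `φ, ψ` and tensor embedding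
`tens`) admits the expectation formula
`HSIC(X,Y) = E[k(X,X') k_Y(Y,Y')] + E[k(X,X')] E[k_Y(Y,Y')]
  − 2 E[E[k(X,X') | X] · E[k_Y(Y,Y') | Y]]`. -/
theorem stmt_12 {Ω 𝒳 𝒴 : Type*} [MeasurableSpace Ω] [MeasurableSpace 𝒳] [MeasurableSpace 𝒴]
    (P : Measure Ω) [IsProbabilityMeasure P]
    {H F G : Type*} [NormedAddCommGroup H] [InnerProductSpace ℝ H] [CompleteSpace H]
    [NormedAddCommGroup F] [InnerProductSpace ℝ F] [CompleteSpace F]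
    [NormedAddCommGroup G] [InnerProductSpace ℝ G] [CompleteSpace G]
    (φ : 𝒳 → H) (ψ : 𝒴 → F)
    (hφm : StronglyMeasurable φ) (hψm : StronglyMeasurable ψ)
    (Mφ Mψ : ℝ) (hφb : ∀ x, ‖φ x‖ ≤ Mφ) (hψb : ∀ y, ‖ψ y‖ ≤ Mψ)
    -- `tens` is the Hilbert tensor product embedding of `H` and `F` into `G`
    (tens : H →L[ℝ] F →L[ℝ] G)
    (htens : ∀ (a c : H) (b e : F), ⟪tens a b, tens c e⟫ = ⟪a, c⟫ * ⟪b, e⟫)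
    (X : Ω → 𝒳) (Y : Ω → 𝒴) (X' : Ω → 𝒳) (Y' : Ω → 𝒴)
    (hX : Measurable X) (hY : Measurable Y) (hX' : Measurable X') (hY' : Measurable Y')
    -- `(X', Y')` is a copy of `(X, Y)` ...
    (hcopy : Measure.map (fun ω => (X ω, Y ω)) P = Measure.map (fun ω => (X' ω, Y' ω)) P)
    -- ... independent of `(X, Y)`
    (hind : IndepFun (fun ω => (X ω, Y ω)) (fun ω => (X' ω, Y' ω)) P) :
    ‖(∫ ω, tens (φ (X ω)) (ψ (Y ω)) ∂P)
        - tens (∫ ω, φ (X ω) ∂P) (∫ ω, ψ (Y ω) ∂P)‖ ^ 2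
      = ∫ ω, ⟪φ (X ω), φ (X' ω)⟫ * ⟪ψ (Y ω), ψ (Y' ω)⟫ ∂P
        + (∫ ω, ⟪φ (X ω), φ (X' ω)⟫ ∂P) * (∫ ω, ⟪ψ (Y ω), ψ (Y' ω)⟫ ∂P)
        - 2 * ∫ ω, (∫ ω', ⟪φ (X ω), φ (X' ω')⟫ ∂P)
            * (∫ ω', ⟪ψ (Y ω), ψ (Y' ω')⟫ ∂P) ∂P := by
  classical
  -- nonnegative bounds
  set Mφ' := max Mφ 0 with hMφ'def
  set Mψ' := max Mψ 0 with hMψ'def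
  have hφb' : ∀ x, ‖φ x‖ ≤ Mφ' := fun x => le_trans (hφb x) (le_max_left _ _)
  have hψb' : ∀ y, ‖ψ y‖ ≤ Mψ' := fun y => le_trans (hψb y) (le_max_left _ _)
  have hMφ0 : (0:ℝ) ≤ Mφ' := le_max_right _ _
  have hMψ0 : (0:ℝ) ≤ Mψ' := le_max_right _ _
  set Z : Ω → 𝒳 × 𝒴 := fun ω => (X ω, Y ω) with hZdef
  set Z' : Ω → 𝒳 × 𝒴 := fun ω => (X' ω, Y' ω) with hZ'def
  have hZ : Measurable Z := hX.prodMk hY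
  have hZ' : Measurable Z' := hX'.prodMk hY'
  set f : 𝒳 × 𝒴 → H := fun p => φ p.1 with hfdef
  set g : 𝒳 × 𝒴 → F := fun p => ψ p.2 with hgdef
  set Φ : 𝒳 × 𝒴 → G := fun p => tens (φ p.1) (ψ p.2) with hΦdef
  have hf : StronglyMeasurable f := hφm.comp_measurable measurable_fst
  have hg : StronglyMeasurable g := hψm.comp_measurable measurable_snd
  have hΦ : StronglyMeasurable Φ :=
    tens.continuous₂.comp_stronglyMeasurable (hf.prodMk hg)
  set μ2 : Measure (𝒳 × 𝒴) := P.map Z with hμ2def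
  haveI : IsProbabilityMeasure μ2 := Measure.isProbabilityMeasure_map hZ.aemeasurable
  have hmapZ' : P.map Z' = μ2 := hcopy.symm
  have hjoint : P.map (fun ω => (Z ω, Z' ω)) = μ2.prod μ2 := by
    rw [(indepFun_iff_map_prod_eq_prod_map_map hZ.aemeasurable hZ'.aemeasurable).mp hind,
      hmapZ']
  -- integrability
  have hfb : ∀ p, ‖f p‖ ≤ Mφ' := fun p => hφb' p.1
  have hgb : ∀ p, ‖g p‖ ≤ Mψ' := fun p => hψb' p.2
  have hΦb : ∀ p, ‖Φ p‖ ≤ ‖tens‖ * Mφ' * Mψ' := by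
    intro p
    calc ‖Φ p‖ ≤ ‖tens‖ * ‖φ p.1‖ * ‖ψ p.2‖ := tens.le_opNorm₂ _ _
    _ ≤ ‖tens‖ * Mφ' * Mψ' := by
        have h1 : ‖tens‖ * ‖φ p.1‖ ≤ ‖tens‖ * Mφ' :=
          mul_le_mul_of_nonneg_left (hφb' _) (ContinuousLinearMap.opNorm_nonneg tens)
        exact mul_le_mul h1 (hψb' _) (norm_nonneg _)
          (mul_nonneg (ContinuousLinearMap.opNorm_nonneg tens) hMφ0)
  have hfint : Integrable f μ2 := aux_int hf.aestronglyMeasurable hfb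
  have hgint : Integrable g μ2 := aux_int hg.aestronglyMeasurable hgb
  have hΦint : Integrable Φ μ2 := aux_int hΦ.aestronglyMeasurable hΦb
  set m : H := ∫ p, f p ∂μ2 with hmdef
  set n : F := ∫ p, g p ∂μ2 with hndef
  set a : G := ∫ p, Φ p ∂μ2 with hadef
  set b : G := tens m n with hbdef
  -- inner products against integrals
  have keyf : ∀ u : H, ∫ q, ⟪u, f q⟫ ∂μ2 = ⟪u, m⟫ := fun u =>
    integral_inner hfint u
  have keyg : ∀ v : F, ∫ q, ⟪v, g q⟫ ∂μ2 = ⟪v, n⟫ := fun v =>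
    integral_inner hgint v
  have keyΦ : ∀ w : G, ∫ q, ⟪w, Φ q⟫ ∂μ2 = ⟪w, a⟫ := fun w =>
    integral_inner hΦint w
  -- pushforward of single integrals
  have e1 : (∫ ω, tens (φ (X ω)) (ψ (Y ω)) ∂P) = a := by
    rw [hadef, hμ2def]
    exact (integral_map hZ.aemeasurable hΦ.aestronglyMeasurable).symm
  have e2 : (∫ ω, φ (X ω) ∂P) = m := by
    rw [hmdef, hμ2def]
    exact (integral_map hZ.aemeasurable hf.aestronglyMeasurable).symm
  have e3 : (∫ ω, ψ (Y ω) ∂P) = n := by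
    rw [hndef, hμ2def]
    exact (integral_map hZ.aemeasurable hg.aestronglyMeasurable).symm
  -- splitting of pair integrals via independence
  have split : ∀ (h : (𝒳 × 𝒴) × (𝒳 × 𝒴) → ℝ), StronglyMeasurable h →
      ∀ C : ℝ, (∀ r, ‖h r‖ ≤ C) →
      (∫ ω, h (Z ω, Z' ω) ∂P) = ∫ p, ∫ q, h (p, q) ∂μ2 ∂μ2 := by
    intro h hm C hC
    have hZZ' : Measurable fun ω => (Z ω, Z' ω) := hZ.prodMk hZ'
    have e : (∫ ω, h (Z ω, Z' ω) ∂P) = ∫ r, h r ∂(μ2.prod μ2) := by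
      rw [← hjoint, integral_map hZZ'.aemeasurable hm.aestronglyMeasurable]
    exact e.trans (integral_prod h (aux_int hm.aestronglyMeasurable hC))
  -- measurability of inner product integrands
  have hinnf : StronglyMeasurable (fun r : (𝒳 × 𝒴) × (𝒳 × 𝒴) => ⟪f r.1, f r.2⟫) :=
    continuous_inner.comp_stronglyMeasurable
      ((hf.comp_measurable measurable_fst).prodMk (hf.comp_measurable measurable_snd))
  have hinng : StronglyMeasurable (fun r : (𝒳 × 𝒴) × (𝒳 × 𝒴) => ⟪g r.1, g r.2⟫) :=
    continuous_inner.comp_stronglyMeasurable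
      ((hg.comp_measurable measurable_fst).prodMk (hg.comp_measurable measurable_snd))
  have hbf : ∀ (p q : 𝒳 × 𝒴), |⟪f p, f q⟫| ≤ Mφ' * Mφ' := by
    intro p q
    calc |⟪f p, f q⟫| ≤ ‖f p‖ * ‖f q‖ := abs_real_inner_le_norm _ _
    _ ≤ Mφ' * Mφ' := mul_le_mul (hfb _) (hfb _) (norm_nonneg _) hMφ0
  have hbg : ∀ (p q : 𝒳 × 𝒴), |⟪g p, g q⟫| ≤ Mψ' * Mψ' := by
    intro p q
    calc |⟪g p, g q⟫| ≤ ‖g p‖ * ‖g q‖ := abs_real_inner_le_norm _ _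
    _ ≤ Mψ' * Mψ' := mul_le_mul (hgb _) (hgb _) (norm_nonneg _) hMψ0
  -- Term 1
  have T1 : (∫ ω, ⟪φ (X ω), φ (X' ω)⟫ * ⟪ψ (Y ω), ψ (Y' ω)⟫ ∂P) = ⟪a, a⟫ := by
    have h1 : (∫ ω, ⟪φ (X ω), φ (X' ω)⟫ * ⟪ψ (Y ω), ψ (Y' ω)⟫ ∂P)
        = ∫ p, ∫ q, ⟪f p, f q⟫ * ⟪g p, g q⟫ ∂μ2 ∂μ2 := by
      exact split (fun r => ⟪f r.1, f r.2⟫ * ⟪g r.1, g r.2⟫) (hinnf.mul hinng)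
        ((Mφ' * Mφ') * (Mψ' * Mψ')) (by
          intro r
          rw [Real.norm_eq_abs, abs_mul]
          exact mul_le_mul (hbf _ _) (hbg _ _) (abs_nonneg _)
            (mul_nonneg hMφ0 hMφ0))
    rw [h1]
    have h2 : ∀ p : 𝒳 × 𝒴, (∫ q, ⟪f p, f q⟫ * ⟪g p, g q⟫ ∂μ2) = ⟪Φ p, a⟫ := by
      intro p
      have : ∀ q : 𝒳 × 𝒴, ⟪f p, f q⟫ * ⟪g p, g q⟫ = ⟪Φ p, Φ q⟫ := fun q =>
        (htens _ _ _ _).symm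
      simp_rw [this]
      exact keyΦ _
    simp_rw [h2]
    have h3 : ∀ p : 𝒳 × 𝒴, ⟪Φ p, a⟫ = ⟪a, Φ p⟫ := fun p => real_inner_comm _ _
    simp_rw [h3]
    exact keyΦ a
  -- Term 2
  have T2f : (∫ ω, ⟪φ (X ω), φ (X' ω)⟫ ∂P) = ⟪m, m⟫ := by
    have h1 : (∫ ω, ⟪φ (X ω), φ (X' ω)⟫ ∂P) = ∫ p, ∫ q, ⟪f p, f q⟫ ∂μ2 ∂μ2 :=
      split (fun r => ⟪f r.1, f r.2⟫) hinnf (Mφ' * Mφ') (by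
        intro r; rw [Real.norm_eq_abs]; exact hbf _ _)
    rw [h1]
    simp_rw [keyf]
    have h3 : ∀ p : 𝒳 × 𝒴, ⟪f p, m⟫ = ⟪m, f p⟫ := fun p => real_inner_comm _ _
    simp_rw [h3]
    exact keyf m
  have T2g : (∫ ω, ⟪ψ (Y ω), ψ (Y' ω)⟫ ∂P) = ⟪n, n⟫ := by
    have h1 : (∫ ω, ⟪ψ (Y ω), ψ (Y' ω)⟫ ∂P) = ∫ p, ∫ q, ⟪g p, g q⟫ ∂μ2 ∂μ2 :=
      split (fun r => ⟪g r.1, g r.2⟫) hinng (Mψ' * Mψ') (by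
        intro r; rw [Real.norm_eq_abs]; exact hbg _ _)
    rw [h1]
    simp_rw [keyg]
    have h3 : ∀ p : 𝒳 × 𝒴, ⟪g p, n⟫ = ⟪n, g p⟫ := fun p => real_inner_comm _ _
    simp_rw [h3]
    exact keyg n
  -- Term 3
  have margf : ∀ u : H, (∫ ω', ⟪u, φ (X' ω')⟫ ∂P) = ⟪u, m⟫ := by
    intro u
    have hsm : StronglyMeasurable (fun q : 𝒳 × 𝒴 => ⟪u, f q⟫) :=
      (innerSL ℝ u).continuous.comp_stronglyMeasurable hf
    have h1 : (∫ ω', ⟪u, φ (X' ω')⟫ ∂P) = ∫ q, ⟪u, f q⟫ ∂(P.map Z') :=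
      (integral_map hZ'.aemeasurable hsm.aestronglyMeasurable).symm
    rw [h1, hmapZ']
    exact keyf u
  have margg : ∀ v : F, (∫ ω', ⟪v, ψ (Y' ω')⟫ ∂P) = ⟪v, n⟫ := by
    intro v
    have hsm : StronglyMeasurable (fun q : 𝒳 × 𝒴 => ⟪v, g q⟫) :=
      (innerSL ℝ v).continuous.comp_stronglyMeasurable hg
    have h1 : (∫ ω', ⟪v, ψ (Y' ω')⟫ ∂P) = ∫ q, ⟪v, g q⟫ ∂(P.map Z') :=
      (integral_map hZ'.aemeasurable hsm.aestronglyMeasurable).symm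
    rw [h1, hmapZ']
    exact keyg v
  have T3 : (∫ ω, (∫ ω', ⟪φ (X ω), φ (X' ω')⟫ ∂P)
      * (∫ ω', ⟪ψ (Y ω), ψ (Y' ω')⟫ ∂P) ∂P) = ⟪b, a⟫ := by
    have h1 : (∫ ω, (∫ ω', ⟪φ (X ω), φ (X' ω')⟫ ∂P)
        * (∫ ω', ⟪ψ (Y ω), ψ (Y' ω')⟫ ∂P) ∂P)
        = ∫ ω, ⟪φ (X ω), m⟫ * ⟪ψ (Y ω), n⟫ ∂P := by
      simp_rw [margf, margg]
    rw [h1]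
    have hsm : StronglyMeasurable (fun p : 𝒳 × 𝒴 => ⟪f p, m⟫ * ⟪g p, n⟫) := by
      have s1 : StronglyMeasurable (fun p : 𝒳 × 𝒴 => ⟪f p, m⟫) :=
        continuous_inner.comp_stronglyMeasurable (hf.prodMk stronglyMeasurable_const)
      have s2 : StronglyMeasurable (fun p : 𝒳 × 𝒴 => ⟪g p, n⟫) :=
        continuous_inner.comp_stronglyMeasurable (hg.prodMk stronglyMeasurable_const)
      exact s1.mul s2
    have h2 : (∫ ω, ⟪φ (X ω), m⟫ * ⟪ψ (Y ω), n⟫ ∂P)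
        = ∫ p, ⟪f p, m⟫ * ⟪g p, n⟫ ∂μ2 := by
      rw [hμ2def]
      exact (integral_map hZ.aemeasurable hsm.aestronglyMeasurable).symm
    rw [h2]
    have h3 : ∀ p : 𝒳 × 𝒴, ⟪f p, m⟫ * ⟪g p, n⟫ = ⟪b, Φ p⟫ := by
      intro p
      rw [hbdef, real_inner_comm, htens, real_inner_comm (g p) n]
    simp_rw [h3]
    exact keyΦ b
  rw [e1, e2, e3, T1, T2f, T2g, T3]
  have hnorm : ‖a - b‖ ^ 2 = ‖a‖ ^ 2 - 2 * ⟪a, b⟫ + ‖b‖ ^ 2 := norm_sub_sq_real a b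
  have haa : ⟪a, a⟫ = ‖a‖ ^ 2 := real_inner_self_eq_norm_sq a
  have hbb : ⟪m, m⟫ * ⟪n, n⟫ = ‖b‖ ^ 2 := by
    rw [← real_inner_self_eq_norm_sq, hbdef, htens]
  have hab : ⟪b, a⟫ = ⟪a, b⟫ := real_inner_comm _ _
  rw [hnorm, ← haa, ← hbb, hab]
  ring
end
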